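/- The fractal cube K_0 ⊆ ℝ^3 defined by the digit set D_0 = {(2,2,j), (2,j,2), (j,2,2) : j ∈ {0,1,2,3,4}} (the '3D cross' with 13 cubes) satisfies: K_0 is connected. -/

import Mathlib

open Pointwise

noncomputable section

/-- `ℝ^k` with the Euclidean metric. -/
abbrev E (k : ℕ) := EuclideanSpace ℝ (Fin k)

/-- Points of `ℝ^k` all of whose coordinates are integers in `{0, …, n-1}`. -/
def digits (n k : ℕ) : Set (E k) := {x | ∀ i, ∃ m : ℕ, m < n ∧ x i = m}

/-- The unit cube `[0,1]^k`. -/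
def unitCube (k : ℕ) : Set (E k) := {x | ∀ i, x i ∈ Set.Icc (0:ℝ) 1}

/-- The "cross" digit set `D₀`: the 13 points `(2,2,j), (2,j,2), (j,2,2)`, `j ∈ {0,…,4}`. -/
def crossD : Set (E 3) :=
  {x | ∃ j : ℕ, j ≤ 4 ∧ (x = ![2, 2, (j:ℝ)] ∨ x = ![2, (j:ℝ), 2] ∨ x = ![(j:ℝ), 2, 2])}

/-!
The cube `Q = [0,1]³` satisfies `T Q ⊆ Q` for the Hutchinson operator `T A = (A + D₀)/5`, and a
compact fixed point of `T` is the decreasing intersection `⋂ₙ Tⁿ Q`, since `T` contracts distances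
between sets by `1/5`. A decreasing intersection of compact connected sets is connected, so it
suffices that every `Tⁿ Q` is connected. The point `d/4` is the fixed point of `x ↦ (x + d)/5`, so
the points `d/4`, `d ∈ D₀`, lie in every `Tⁿ Q`. Writing `dᵢⱼ` for the digit with `j` in coordinate
`i` and `2` elsewhere, `(dᵢ₄/4 + dᵢⱼ)/5 = (dᵢ₀/4 + dᵢ₍ⱼ₊₁₎)/5` shows that consecutive pieces
`(Tⁿ Q + dᵢⱼ)/5` of an arm meet, and the three arms share the central piece `dᵢ₂ = (2,2,2)`.
Hence `Tⁿ⁺¹ Q` is connected whenever `Tⁿ Q` is.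
-/

open Set Metric Filter Function

section Hutchinson

variable {V : Type*} [NormedAddCommGroup V] [NormedSpace ℝ V]

def hutchinson (r : ℝ) (D A : Set V) : Set V := r • (A + D)

variable {r : ℝ} {D A B : Set V}

theorem mem_hutchinson {x : V} : x ∈ hutchinson r D A ↔ ∃ a ∈ A, ∃ d ∈ D, r • (a + d) = x := by
  constructor
  · rintro ⟨_, ⟨a, ha, d, hd, rfl⟩, rfl⟩
    exact ⟨a, ha, d, hd, rfl⟩
  · rintro ⟨a, ha, d, hd, rfl⟩
    exact ⟨a + d, add_mem_add ha hd, rfl⟩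

theorem hutchinson_mono (r : ℝ) (D : Set V) : Monotone (hutchinson r D) := fun _ _ h =>
  smul_set_mono (add_subset_add_right h)

theorem IsCompact.hutchinson (hA : IsCompact A) (hD : D.Finite) :
    IsCompact (hutchinson r D A) :=
  (hA.add hD.isCompact).smul r

theorem IsCompact.hutchinson_iterate (hA : IsCompact A) (hD : D.Finite) (n : ℕ) :
    IsCompact ((_root_.hutchinson r D)^[n] A) := by
  induction n with
  | zero => exact hA
  | succ n ih => rw [iterate_succ_apply']; exact ih.hutchinson hD

theorem hutchinson_range {ι : Type*} (g : ι → V) :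
    hutchinson r (range g) A = ⋃ i, (fun x => r • (x + g i)) '' A := by
  ext x
  simp only [mem_hutchinson, mem_iUnion, mem_image, exists_range_iff]
  exact ⟨fun ⟨a, ha, i, hx⟩ => ⟨i, a, ha, hx⟩, fun ⟨i, a, ha, hx⟩ => ⟨a, ha, i, hx⟩⟩

theorem exists_dist_le_of_mem_hutchinson {ε : ℝ} (h : ∀ a ∈ A, ∃ b ∈ B, dist a b ≤ ε) :
    ∀ x ∈ hutchinson r D A, ∃ y ∈ hutchinson r D B, dist x y ≤ |r| * ε := by
  simp only [mem_hutchinson]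
  rintro _ ⟨a, ha, d, hd, rfl⟩
  obtain ⟨b, hb, hab⟩ := h a ha
  refine ⟨r • (b + d), ⟨b, hb, d, hd, rfl⟩, ?_⟩
  rw [dist_smul₀, dist_add_right, Real.norm_eq_abs]
  exact mul_le_mul_of_nonneg_left hab (abs_nonneg r)

theorem exists_dist_le_of_mem_hutchinson_iterate {ε : ℝ} (h : ∀ a ∈ A, ∃ b ∈ B, dist a b ≤ ε)
    (n : ℕ) :
    ∀ x ∈ (hutchinson r D)^[n] A, ∃ y ∈ (hutchinson r D)^[n] B, dist x y ≤ |r| ^ n * ε := by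
  induction n with
  | zero => simpa using h
  | succ n ih =>
    simp only [iterate_succ_apply', pow_succ', mul_assoc]
    exact exists_dist_le_of_mem_hutchinson ih

end Hutchinson

theorem mem_closure_of_dist_le_pow {X : Type*} [PseudoMetricSpace X] {x : X} {s : Set X}
    {q c : ℝ} (hq₀ : 0 ≤ q) (hq : q < 1) (h : ∀ᶠ n in atTop, ∃ y ∈ s, dist x y ≤ q ^ n * c) :
    x ∈ closure s := by
  refine Metric.mem_closure_iff.2 fun ε hε => ?_
  have hsmall : ∀ᶠ n in atTop, q ^ n * c < ε := by
    refine Tendsto.eventually_lt_const hε ?_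
    simpa using (tendsto_pow_atTop_nhds_zero_of_lt_one hq₀ hq).mul_const c
  obtain ⟨n, ⟨y, hy, hxy⟩, hn⟩ := (h.and hsmall).exists
  exact ⟨y, hy, hxy.trans_lt hn⟩

theorem isPreconnected_iInter_of_directed {X ι : Type*} [TopologicalSpace X] [T2Space X]
    [Nonempty ι] {C : ι → Set X} (hdir : Directed (· ⊇ ·) C) (hcpt : ∀ i, IsCompact (C i))
    (hconn : ∀ i, IsPreconnected (C i)) : IsPreconnected (⋂ i, C i) := by
  rw [isPreconnected_closed_iff]
  rintro t t' ht ht' hcover ⟨x, hx, hxt⟩ ⟨y, hy, hyt'⟩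
  by_contra hdisj
  obtain ⟨i₀⟩ := ‹Nonempty ι›
  have hK : IsCompact (⋂ i, C i) :=
    (hcpt i₀).of_isClosed_subset (isClosed_iInter fun i => (hcpt i).isClosed) (iInter_subset _ i₀)
  obtain ⟨U, U', hU, hU', htU, ht'U', hUU'⟩ := SeparatedNhds.of_isCompact_isCompact
    (hK.inter_right ht) (hK.inter_right ht') <|
      disjoint_left.2 fun z ⟨hzK, hzt⟩ ⟨_, hzt'⟩ => hdisj ⟨z, hzK, hzt, hzt'⟩
  obtain ⟨i, hi⟩ := exists_subset_nhds_of_isCompact hdir hcpt (U := U ∪ U') fun z hz =>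
    (hU.union hU').mem_nhds ((hcover hz).imp (fun h => htU ⟨hz, h⟩) (fun h => ht'U' ⟨hz, h⟩))
  obtain ⟨z, -, hzU, hzU'⟩ := hconn i U U' hU hU' hi
    ⟨x, mem_iInter.1 hx i, htU ⟨hx, hxt⟩⟩ ⟨y, mem_iInter.1 hy i, ht'U' ⟨hy, hyt'⟩⟩
  exact hUU'.le_bot ⟨hzU, hzU'⟩

theorem eq_iInter_iterate_hutchinson {V : Type*} [NormedAddCommGroup V] [NormedSpace ℝ V]
    {r : ℝ} {D K Q : Set V} (hr : |r| < 1) (hK : IsCompact K) (hKne : K.Nonempty)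
    (hfix : hutchinson r D K = K) (hQ : IsCompact Q) (hQne : Q.Nonempty)
    (hD : D.Finite) (hQ_inv : hutchinson r D Q ⊆ Q) :
    K = ⋂ n, (hutchinson r D)^[n] Q := by
  set T := hutchinson r D
  have hbdd := hK.isBounded.union hQ.isBounded
  have close : ∀ {A B : Set V}, A ⊆ K ∪ Q → B ⊆ K ∪ Q → B.Nonempty →
      ∀ n, ∀ x ∈ T^[n] A, ∃ y ∈ T^[n] B, dist x y ≤ |r| ^ n * diam (K ∪ Q) := by
    intro A B hA hB ⟨b, hb⟩
    exact exists_dist_le_of_mem_hutchinson_iterate fun a ha =>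
      ⟨b, hb, dist_le_diam_of_mem hbdd (hA ha) (hB hb)⟩
  have hKn (n : ℕ) : T^[n] K = K := iterate_fixed hfix n
  ext x
  constructor
  · refine fun hx => mem_iInter.2 fun n => (hQ.hutchinson_iterate hD n).isClosed.closure_subset ?_
    refine mem_closure_of_dist_le_pow (c := diam (K ∪ Q)) (abs_nonneg r) hr ?_
    filter_upwards [eventually_ge_atTop n] with m hm
    obtain ⟨y, hy, hxy⟩ := close subset_union_left subset_union_right hQne m x ((hKn m).symm ▸ hx)
    exact ⟨y, (hutchinson_mono r D).antitone_iterate_of_map_le hQ_inv hm hy, hxy⟩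
  · refine fun hx => hK.isClosed.closure_subset ?_
    refine mem_closure_of_dist_le_pow (c := diam (K ∪ Q)) (abs_nonneg r) hr (.of_forall fun m => ?_)
    obtain ⟨y, hy, hxy⟩ := close subset_union_right subset_union_left hKne m x (mem_iInter.1 hx m)
    exact ⟨y, hKn m ▸ hy, hxy⟩

theorem unitCube_eq_image (k : ℕ) :
    unitCube k = WithLp.toLp 2 '' univ.pi fun _ => Icc (0 : ℝ) 1 := by
  ext x
  exact ⟨fun hx => ⟨x.ofLp, fun i _ => hx i, rfl⟩, by rintro ⟨y, hy, rfl⟩ i; exact hy i trivial⟩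

theorem isCompact_unitCube (k : ℕ) : IsCompact (unitCube k) :=
  unitCube_eq_image k ▸ (isCompact_univ_pi fun _ => isCompact_Icc).image (PiLp.continuous_toLp 2 _)

theorem isConnected_unitCube (k : ℕ) : IsConnected (unitCube k) :=
  unitCube_eq_image k ▸ (isConnected_univ_pi.2 fun _ => isConnected_Icc zero_le_one).image _
    (PiLp.continuous_toLp 2 _).continuousOn

theorem hutchinson_unitCube_subset {n k : ℕ} {D : Set (E k)} (hD : D ⊆ digits n k) :
    hutchinson (n : ℝ)⁻¹ D (unitCube k) ⊆ unitCube k := by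
  intro x hx i
  obtain ⟨a, ha, d, hd, rfl⟩ := mem_hutchinson.1 hx
  obtain ⟨m, hm, hdi⟩ := hD hd i
  have hmn : (m : ℝ) + 1 ≤ n := by exact_mod_cast hm
  have hn : (0 : ℝ) < n := by linarith [m.cast_nonneg (α := ℝ)]
  obtain ⟨ha₀, ha₁⟩ := ha i
  simp only [PiLp.smul_apply, PiLp.add_apply, smul_eq_mul, hdi]
  constructor
  · positivity
  · rw [inv_mul_le_iff₀ hn]; linarith

theorem inv_smul_mem_unitCube_of_mem_digits {n k : ℕ} {d : E k} (hd : d ∈ digits n k) :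
    ((n : ℝ) - 1)⁻¹ • d ∈ unitCube k := by
  intro i
  obtain ⟨m, hm, hdi⟩ := hd i
  have hmn : (m : ℝ) ≤ n - 1 := by
    have : (m : ℝ) + 1 ≤ n := by exact_mod_cast hm
    linarith
  simp only [PiLp.smul_apply, smul_eq_mul, hdi]
  have hn : (0 : ℝ) ≤ n - 1 := m.cast_nonneg.trans hmn
  exact ⟨mul_nonneg (inv_nonneg.2 hn) m.cast_nonneg, inv_mul_le_one_of_le₀ hmn hn⟩

def crossDigit (p : Fin 3 × Fin 5) : E 3 :=
  WithLp.toLp 2 fun c => if c = p.1 then ((p.2 : ℕ) : ℝ) else 2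

theorem range_crossDigit : range crossDigit = crossD := by
  ext x
  constructor
  · rintro ⟨⟨i, j⟩, rfl⟩
    refine ⟨j, by omega, ?_⟩
    fin_cases i
    · right; right; ext c; fin_cases c <;> simp [crossDigit]
    · right; left; ext c; fin_cases c <;> simp [crossDigit]
    · left; ext c; fin_cases c <;> simp [crossDigit]
  · rintro ⟨j, hj, h | h | h⟩ <;> [use (2, ⟨j, by omega⟩); use (1, ⟨j, by omega⟩);
      use (0, ⟨j, by omega⟩)] <;>
    · ext c; rw [h]; fin_cases c <;> simp [crossDigit]

theorem crossD_subset_digits : crossD ⊆ digits 5 3 := by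
  rw [← range_crossDigit]
  rintro _ ⟨⟨i, j⟩, rfl⟩ c
  by_cases hc : c = i
  · exact ⟨j, j.isLt, by simp [crossDigit, hc]⟩
  · exact ⟨2, by norm_num, by simp [crossDigit, hc]⟩

theorem crossD_finite : crossD.Finite := range_crossDigit ▸ finite_range _

theorem crossDigit_center (i : Fin 3) : crossDigit (i, 2) = crossDigit (0, 2) := by
  ext c
  simp only [crossDigit]
  split_ifs <;> norm_num

theorem crossDigit_step (i : Fin 3) {j k : Fin 5} (hjk : (k : ℕ) = j + 1) :
    (4 : ℝ)⁻¹ • crossDigit (i, 4) + crossDigit (i, j) =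
      (4 : ℝ)⁻¹ • crossDigit (i, 0) + crossDigit (i, k) := by
  ext c
  simp only [crossDigit, PiLp.add_apply, PiLp.smul_apply, smul_eq_mul]
  split_ifs
  · push_cast [hjk]; norm_num [add_comm]
  · ring

theorem inv_four_smul_crossDigit_mem_hutchinson {A : Set (E 3)}
    (hA : ∀ p, (4 : ℝ)⁻¹ • crossDigit p ∈ A) (p : Fin 3 × Fin 5) :
    (4 : ℝ)⁻¹ • crossDigit p ∈ hutchinson 5⁻¹ crossD A :=
  mem_hutchinson.2 ⟨_, hA p, crossDigit p, range_crossDigit ▸ mem_range_self p, by module⟩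

theorem isConnected_hutchinson_crossD {A : Set (E 3)} (hA : IsConnected A)
    (hcore : ∀ p, (4 : ℝ)⁻¹ • crossDigit p ∈ A) : IsConnected (hutchinson 5⁻¹ crossD A) := by
  rw [← range_crossDigit, hutchinson_range]
  set s : Fin 3 × Fin 5 → Set (E 3) := fun p => (fun x => (5 : ℝ)⁻¹ • (x + crossDigit p)) '' A
  set R : Fin 3 × Fin 5 → Fin 3 × Fin 5 → Prop := fun p q => (s p ∩ s q).Nonempty
  have : Std.Symm R := ⟨fun p q h => by simpa only [R, inter_comm] using h⟩
  have step (i : Fin 3) {j k : Fin 5} (hjk : (k : ℕ) = j + 1) : R (i, j) (i, k) :=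
    ⟨_, mem_image_of_mem _ (hcore (i, 4)), _, hcore (i, 0), by simp only [crossDigit_step i hjk]⟩
  have to_center (p : Fin 3 × Fin 5) : Relation.ReflTransGen R p (0, 2) := by
    obtain ⟨i, j⟩ := p
    have h_center : R (i, 2) (0, 2) := by
      simpa only [R, s, crossDigit_center i, inter_self] using (hA.image _ (by fun_prop)).nonempty
    refine Relation.ReflTransGen.tail ?_ h_center
    fin_cases j
    · exact .tail (.single (step i (j := 0) (k := 1) rfl)) (step i (j := 1) rfl)
    · exact .single (step i (j := 1) rfl)
    · exact .refl
    · exact .single (symm_of R (step i (j := 2) (k := 3) rfl))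
    · exact .tail (.single (symm_of R (step i (j := 3) (k := 4) rfl)))
        (symm_of R (step i (j := 2) rfl))
  exact IsConnected.iUnion_of_reflTransGen (fun p => hA.image _ (by fun_prop)) fun p q =>
    (to_center p).trans (symm_of _ (to_center q))

theorem inv_four_smul_crossDigit_mem_iterate (n : ℕ) (p : Fin 3 × Fin 5) :
    (4 : ℝ)⁻¹ • crossDigit p ∈ (hutchinson 5⁻¹ crossD)^[n] (unitCube 3) := by
  induction n generalizing p with
  | zero =>
    have h := inv_smul_mem_unitCube_of_mem_digits <|
      crossD_subset_digits (range_crossDigit ▸ mem_range_self p)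
    rwa [show ((5 : ℕ) : ℝ) - 1 = 4 by norm_num] at h
  | succ n ih =>
    rw [iterate_succ_apply']
    exact inv_four_smul_crossDigit_mem_hutchinson ih p

theorem isConnected_iterate_hutchinson_crossD (n : ℕ) :
    IsConnected ((hutchinson 5⁻¹ crossD)^[n] (unitCube 3)) := by
  induction n with
  | zero => exact isConnected_unitCube 3
  | succ n ih =>
    rw [iterate_succ_apply']
    exact isConnected_hutchinson_crossD ih (inv_four_smul_crossDigit_mem_iterate n)

/-- The fractal cube `K₀ ⊆ ℝ³` with digit set the 3D cross `D₀`
(the attractor of `A ↦ (A + D₀)/5`) is connected. -/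
theorem crossFractal_connected (K₀ : Set (E 3)) (hne : K₀.Nonempty) (hc : IsCompact K₀)
    (hattr : K₀ = (5:ℝ)⁻¹ • (K₀ + crossD)) :
    IsConnected K₀ := by
  have hcube : hutchinson 5⁻¹ crossD (unitCube 3) ⊆ unitCube 3 := by
    simpa using hutchinson_unitCube_subset (n := 5) crossD_subset_digits
  have hK : K₀ = ⋂ n, (hutchinson 5⁻¹ crossD)^[n] (unitCube 3) :=
    eq_iInter_iterate_hutchinson (by norm_num [abs_of_pos]) hc hne hattr.symm
      (isCompact_unitCube 3) (isConnected_unitCube 3).nonempty crossD_finite hcube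
  refine ⟨hne, hK ▸ isPreconnected_iInter_of_directed ?_ ?_ ?_⟩
  · exact ((hutchinson_mono _ _).antitone_iterate_of_map_le hcube).directed_ge
  · exact (isCompact_unitCube 3).hutchinson_iterate crossD_finite
  · exact fun n => (isConnected_iterate_hutchinson_crossD n).isPreconnected
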